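/- Let k be a field of characteristic ≠ 2 and k_F G a twisted group algebra with a diagonal involution σ(x) = s(x)x. Then σ is a strong involution (a + σ(a) ∈ k·1 and a·σ(a) ∈ k·1 for all a ∈ k_F G) if and only if: (i) every element of G has order dividing 2 (so G ≅ (Z₂)ⁿ if G is finite abelian); (ii) s(e) = 1 and s(x) = -1 for all x ≠ e; and (iii) F(x,y)/F(y,x) = -1 whenever x ≠ e, y ≠ e, and x ≠ y. -/

import Mathlib

/-!
Necessity is read off basis elements: `x + σ(x) = (1 + s(x)) x` lies in `k·1` only if `s(x) = -1`
for `x ≠ 1`; the coefficient of `x²` in `x σ(x)` is `s(x) F(x,x) ≠ 0`, so `x² = 1`; and the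
coefficient of `xy` in `(x + y) σ(x + y)` is `s(y) F(x,y) + s(x) F(y,x)`, which must vanish.
Conversely, the conditions give `s(xy) F(x,y) = s(x) s(y) F(y,x)`, which makes `σ`
anti-multiplicative, and for `z ≠ 1` the terms of `a σ(a)` at `z` indexed by `u` and `u⁻¹ z`
cancel in pairs, the pairing `u ↦ u⁻¹ z` having no fixed point since `u² = 1 ≠ z`.
-/

def delta {G : Type*} [DecidableEq G] {k : Type*} [Zero k] [One k] (x : G) : G → k :=
  fun y => if y = x then 1 else 0

/-- The twisted product on the group algebra `kG`. -/
def tmul {G : Type*} [Group G] [Fintype G] {k : Type*} [Field k]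
    (F : G → G → k) (a b : G → k) : G → k :=
  fun z => ∑ x : G, F x (x⁻¹ * z) * a x * b (x⁻¹ * z)

/-- The diagonal linear map `σ(x) = s(x) x` extended linearly. -/
def sigmaMap {G : Type*} {k : Type*} [Mul k] (s : G → k) (a : G → k) : G → k :=
  fun x => s x * a x

/-- `σ` is a strong involution of `k_F G`: an algebra involution with
`a + σ(a) ∈ k·1` and `a·σ(a) ∈ k·1` for all `a`. -/
def IsStrongInvolution {G : Type*} [Group G] [Fintype G] [DecidableEq G] {k : Type*} [Field k]
    (F : G → G → k) (s : G → k) : Prop :=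
  (∀ a : G → k, sigmaMap s (sigmaMap s a) = a) ∧
  sigmaMap s (delta 1) = (delta 1 : G → k) ∧
  (∀ a b : G → k, sigmaMap s (tmul F a b) = tmul F (sigmaMap s b) (sigmaMap s a)) ∧
  (∀ a : G → k, ∃ c : k, a + sigmaMap s a = c • (delta 1 : G → k)) ∧
  (∀ a : G → k, ∃ c : k, tmul F a (sigmaMap s a) = c • (delta 1 : G → k))

lemma exists_eq_smul_delta_one_iff {G : Type*} [One G] [DecidableEq G] {k : Type*}
    [MulZeroOneClass k] (f : G → k) :
    (∃ c : k, f = c • delta 1) ↔ ∀ z, z ≠ 1 → f z = 0 := by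
  constructor
  · rintro ⟨c, rfl⟩ z hz
    simp [delta, hz]
  · intro h
    refine ⟨f 1, funext fun z => ?_⟩
    by_cases hz : z = 1
    · simp [delta, hz]
    · simp [delta, hz, h z hz]

lemma sigmaMap_sigmaMap {G : Type*} {k : Type*} [Monoid k] {s : G → k} (h : ∀ x, s x * s x = 1)
    (a : G → k) : sigmaMap s (sigmaMap s a) = a := by
  funext x
  simp only [sigmaMap, ← mul_assoc, h, one_mul]

section Diagonal

variable {G : Type*} [One G] [DecidableEq G] {k : Type*} [CommRing k] {s : G → k}

lemma sign_one_of_sigmaMap_delta_one (h : sigmaMap s (delta 1) = (delta 1 : G → k)) : s 1 = 1 := by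
  simpa [sigmaMap, delta] using congrFun h 1

lemma sigmaMap_delta_one (h : s 1 = 1) : sigmaMap s (delta 1) = (delta 1 : G → k) := by
  funext x
  by_cases hx : x = 1 <;> simp [sigmaMap, delta, hx, h]

lemma sign_eq_neg_one_of_add_sigmaMap
    (h : ∀ a : G → k, ∃ c : k, a + sigmaMap s a = c • delta 1) {x : G} (hx : x ≠ 1) :
    s x = -1 := by
  have hx := (exists_eq_smul_delta_one_iff _).1 (h (delta x)) x hx
  simp only [Pi.add_apply, sigmaMap, delta, if_true] at hx
  linear_combination hx

lemma exists_add_sigmaMap_eq_smul_delta_one (h : ∀ x : G, x ≠ 1 → s x = -1) (a : G → k) :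
    ∃ c : k, a + sigmaMap s a = c • delta 1 :=
  (exists_eq_smul_delta_one_iff _).2 fun z hz => by simp [sigmaMap, h z hz]

end Diagonal

section TwistedProduct

variable {G : Type*} [CommGroup G] [Fintype G] {k : Type*} [Field k] {F : G → G → k} {s : G → k}

lemma tmul_add_left (a a' b : G → k) : tmul F (a + a') b = tmul F a b + tmul F a' b := by
  funext z
  simp only [tmul, Pi.add_apply, mul_add, add_mul, Finset.sum_add_distrib]

lemma tmul_delta_left_apply [DecidableEq G] (x : G) (b : G → k) (z : G) :
    tmul F (delta x) b z = F x (x⁻¹ * z) * b (x⁻¹ * z) := by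
  simp [tmul, delta]

lemma sign_mul_twist_self_eq_zero_of_tmul_sigmaMap [DecidableEq G]
    (h : ∀ a : G → k, ∃ c : k, tmul F a (sigmaMap s a) = c • delta 1) {x : G} (hx : x * x ≠ 1) :
    s x * F x x = 0 := by
  have hx := (exists_eq_smul_delta_one_iff _).1 (h (delta x)) (x * x) hx
  simpa [tmul_delta_left_apply, sigmaMap, delta, mul_comm] using hx

lemma twist_add_eq_zero_of_tmul_sigmaMap [DecidableEq G]
    (h : ∀ a : G → k, ∃ c : k, tmul F a (sigmaMap s a) = c • delta 1) {x y : G} (hxy : x ≠ y)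
    (hxy1 : x * y ≠ 1) :
    s y * F x y + s x * F y x = 0 := by
  have hxy' := (exists_eq_smul_delta_one_iff _).1 (h (delta x + delta y)) (x * y) hxy1
  rw [tmul_add_left, Pi.add_apply, tmul_delta_left_apply, tmul_delta_left_apply,
    inv_mul_cancel_left, mul_comm x y, inv_mul_cancel_left] at hxy'
  simpa [sigmaMap, delta, hxy, hxy.symm, mul_comm] using hxy'

lemma sigmaMap_tmul (h : ∀ x y, s (x * y) * F x y = s x * s y * F y x) (a b : G → k) :
    sigmaMap s (tmul F a b) = tmul F (sigmaMap s b) (sigmaMap s a) := by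
  funext z
  simp only [sigmaMap, tmul, Finset.mul_sum]
  refine Fintype.sum_equiv (Equiv.divLeft z) _ _ fun u => ?_
  have hu := h u (u⁻¹ * z)
  simp only [Equiv.divLeft_apply, div_eq_inv_mul, mul_inv_cancel_left, mul_inv_rev, inv_inv,
    inv_mul_cancel_comm] at hu ⊢
  linear_combination (a u * b (u⁻¹ * z)) * hu

lemma exists_tmul_sigmaMap_eq_smul_delta_one [DecidableEq G] (hsq : ∀ x : G, x * x = 1)
    (h : ∀ x y, x * y ≠ 1 → s y * F x y + s x * F y x = 0) (a : G → k) :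
    ∃ c : k, tmul F a (sigmaMap s a) = c • delta 1 := by
  refine (exists_eq_smul_delta_one_iff _).2 fun z hz => ?_
  refine Finset.sum_involution (fun u _ => u⁻¹ * z) (fun u _ => ?_) (fun u _ _ hu => ?_)
    (fun _ _ => Finset.mem_univ _) (fun u _ => ?_)
  · have hu := h u (u⁻¹ * z) (by rwa [mul_inv_cancel_left])
    simp only [sigmaMap, mul_inv_rev, inv_inv, inv_mul_cancel_comm]
    linear_combination (a u * a (u⁻¹ * z)) * hu
  · exact hz (by rw [← hsq u]; nth_rewrite 2 [← hu]; rw [mul_inv_cancel_left])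
  · simp only [mul_inv_rev, inv_inv, inv_mul_cancel_comm]

end TwistedProduct

section Signs

variable {G : Type*} [Group G] {k : Type*} [CommRing k] {F : G → G → k} {s : G → k}

lemma mul_ne_one_of_ne (hsq : ∀ x : G, x * x = 1) {x y : G} (hxy : x ≠ y) : x * y ≠ 1 :=
  fun h => hxy ((mul_eq_one_iff_eq_inv.1 h).trans (inv_eq_of_mul_eq_one_right (hsq y)))

lemma sign_mul_self_eq_one (hs1 : s 1 = 1) (hs : ∀ x : G, x ≠ 1 → s x = -1) (x : G) : s x * s x = 1 := by
  by_cases hx : x = 1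
  · rw [hx, hs1, one_mul]
  · rw [hs x hx]; ring

lemma sign_mul_twist_eq (hsq : ∀ x : G, x * x = 1) (hs1 : s 1 = 1)
    (hs : ∀ x : G, x ≠ 1 → s x = -1) (hr : ∀ x, F x 1 = 1) (hl : ∀ x, F 1 x = 1)
    (hanti : ∀ x y, x ≠ 1 → y ≠ 1 → x ≠ y → F x y = -F y x) (x y : G) :
    s (x * y) * F x y = s x * s y * F y x := by
  obtain rfl | hx := eq_or_ne x 1
  · simp [hl, hr, hs1]
  obtain rfl | hy := eq_or_ne y 1
  · simp [hl, hr, hs1]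
  obtain rfl | hxy := eq_or_ne x y
  · rw [hsq, hs1, sign_mul_self_eq_one hs1 hs]
  · rw [hs _ (mul_ne_one_of_ne hsq hxy), hs x hx, hs y hy, hanti x y hx hy hxy]
    ring

lemma twist_add_eq_zero (hsq : ∀ x : G, x * x = 1) (hs1 : s 1 = 1)
    (hs : ∀ x : G, x ≠ 1 → s x = -1) (hr : ∀ x, F x 1 = 1) (hl : ∀ x, F 1 x = 1)
    (hanti : ∀ x y, x ≠ 1 → y ≠ 1 → x ≠ y → F x y = -F y x) {x y : G} (hxy1 : x * y ≠ 1) :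
    s y * F x y + s x * F y x = 0 := by
  obtain rfl | hx := eq_or_ne x 1
  · rw [one_mul] at hxy1
    rw [hl, hr, hs y hxy1, hs1]; ring
  obtain rfl | hy := eq_or_ne y 1
  · rw [mul_one] at hxy1
    rw [hr, hl, hs x hx, hs1]; ring
  have hxy : x ≠ y := by rintro rfl; exact hxy1 (hsq x)
  rw [hs x hx, hs y hy, hanti x y hx hy hxy]
  ring

end Signs

theorem stmt7_general {G : Type*} [CommGroup G] [Fintype G] [DecidableEq G] {k : Type*} [Field k]
    (F : G → G → k) (hne : ∀ x y, F x y ≠ 0)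
    (hr : ∀ x, F x 1 = 1) (hl : ∀ x, F 1 x = 1)
    (s : G → k) :
    IsStrongInvolution F s
    ↔ ((∀ x : G, x * x = 1) ∧
       (s 1 = 1 ∧ ∀ x : G, x ≠ 1 → s x = -1) ∧
       (∀ x y : G, x ≠ 1 → y ≠ 1 → x ≠ y → F x y / F y x = -1)) := by
  constructor
  · rintro ⟨-, hunit, -, hadd, hmul⟩
    have hs : ∀ x : G, x ≠ 1 → s x = -1 := fun x hx => sign_eq_neg_one_of_add_sigmaMap hadd hx
    have hsq : ∀ x : G, x * x = 1 := by
      intro x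
      by_contra hxx
      have hx : x ≠ 1 := by rintro rfl; exact hxx (one_mul 1)
      refine mul_ne_zero ?_ (hne x x) (sign_mul_twist_self_eq_zero_of_tmul_sigmaMap hmul hxx)
      rw [hs x hx]
      exact neg_ne_zero.2 one_ne_zero
    refine ⟨hsq, ⟨sign_one_of_sigmaMap_delta_one hunit, hs⟩, fun x y hx hy hxy => ?_⟩
    have hxy' := twist_add_eq_zero_of_tmul_sigmaMap hmul hxy (mul_ne_one_of_ne hsq hxy)
    rw [hs x hx, hs y hy] at hxy'
    rw [div_eq_iff (hne y x)]
    linear_combination -hxy'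
  · rintro ⟨hsq, ⟨hs1, hs⟩, hF⟩
    have hanti : ∀ x y, x ≠ 1 → y ≠ 1 → x ≠ y → F x y = -F y x := fun x y hx hy hxy => by
      rw [← neg_one_mul, ← hF x y hx hy hxy, div_mul_cancel₀ _ (hne y x)]
    exact ⟨sigmaMap_sigmaMap (sign_mul_self_eq_one hs1 hs), sigmaMap_delta_one hs1,
      sigmaMap_tmul (sign_mul_twist_eq hsq hs1 hs hr hl hanti),
      exists_add_sigmaMap_eq_smul_delta_one hs,
      exists_tmul_sigmaMap_eq_smul_delta_one hsq fun _ _ => twist_add_eq_zero hsq hs1 hs hr hl hanti⟩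

/-- characterization of diagonal strong involutions. -/
theorem stmt7 {G : Type*} [CommGroup G] [Fintype G] [DecidableEq G] {k : Type*} [Field k]
    (h2 : (2 : k) ≠ 0)
    (F : G → G → k) (hne : ∀ x y, F x y ≠ 0)
    (hr : ∀ x, F x 1 = 1) (hl : ∀ x, F 1 x = 1)
    (s : G → k) (hs : ∀ x, s x ≠ 0) :
    IsStrongInvolution F s
    ↔ ((∀ x : G, x * x = 1) ∧
       (s 1 = 1 ∧ ∀ x : G, x ≠ 1 → s x = -1) ∧
       (∀ x y : G, x ≠ 1 → y ≠ 1 → x ≠ y → F x y / F y x = -1)) :=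
  stmt7_general F hne hr hl s
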